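/- Let Z be a T²_{i,j}-normalized 3-tail of C with C_i ∪ C_j ∪ C_1 ⊆ Z^c, and let W be a Z-terminal tail in T³_{i,j} contained in Z^c with #(Term_Z ∩ Term_W) = 2. Then Z ∪ W is a 2-tail containing v_i, v_j and omitting v_1, and consequently there exists a Z-terminal tail W' ∈ T²_{i,j} with Z ⊆ W'. -/

import Mathlib

open Set

/- Dual multigraph model of a nodal curve: vertices `V` are irreducible
components, edges `E` are nodes, with endpoint maps `s t : E → V`. -/

/-- The set of terminal points (edges of the cut) of a vertex subset `Z`. -/
def TermPts {V E : Type} (s t : E → V) (Z : Set V) : Set E :=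
  {e | (s e ∈ Z ∧ t e ∉ Z) ∨ (t e ∈ Z ∧ s e ∉ Z)}

/-- A subcurve is a nonempty proper subset of the components. -/
def Subcurve {V : Type} (Z : Set V) : Prop := Z.Nonempty ∧ Z ≠ Set.univ

/-- Connectivity of the induced sub-multigraph on `Z`. -/
def ConnOn {V E : Type} (s t : E → V) (Z : Set V) : Prop :=
  ∀ x ∈ Z, ∀ y ∈ Z,
    Relation.ReflTransGen
      (fun a b => a ∈ Z ∧ b ∈ Z ∧ ∃ e, (s e = a ∧ t e = b) ∨ (s e = b ∧ t e = a)) x y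

/-- A tail is a subcurve with both sides connected. -/
def IsTail {V E : Type} (s t : E → V) (Z : Set V) : Prop :=
  Subcurve Z ∧ ConnOn s t Z ∧ ConnOn s t Zᶜ

/-- `k_Z`, the number of terminal points of `Z`. -/
noncomputable def kcut {V E : Type} (s t : E → V) (Z : Set V) : ℕ :=
  (TermPts s t Z).ncard

/-- The pair `(Z, Z')` is free if the edge cuts are disjoint. -/
def FreePair {V E : Type} (s t : E → V) (Z Z' : Set V) : Prop :=
  TermPts s t Z ∩ TermPts s t Z' = ∅

/-- The pair `(Z, Z')` is perfect. -/
def PerfectPair {V : Type} (Z Z' : Set V) : Prop :=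
  Z ⊆ Z' ∨ Z' ⊆ Z ∨ Zᶜ ⊆ Z' ∨ Z' ⊆ Zᶜ
/-- `S²_{i,j}`: the 2-tails containing `vi, vj` and omitting `v1`. -/
def S2set {V E : Type} (s t : E → V) (v1 vi vj : V) : Set (Set V) :=
  {Z | IsTail s t Z ∧ kcut s t Z = 2 ∧ vi ∈ Z ∧ vj ∈ Z ∧ v1 ∉ Z}

/-- The levels of the inductive construction of the set of nested tails:
level `0` is `S` itself, and level `m+1` consists of the members `Z` of `S`
with `W_m ◁ Z`, where `W_m` is the intersection of the members of level `m`. -/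
def Tlevel {V E : Type} (s t : E → V) (S : Set (Set V)) : ℕ → Set (Set V)
  | 0 => S
  | (m + 1) =>
      {Z | Z ∈ S ∧ ⋂₀ Tlevel s t S m ⊂ Z ∧ FreePair s t (⋂₀ Tlevel s t S m) Z}

/-- The set of nested tails extracted from `S`: the tails `W_m = ⋂ (level m)`
for all `m` with level `m` nonempty. -/
def Tset {V E : Type} (s t : E → V) (S : Set (Set V)) : Set (Set V) :=
  {X | ∃ m, (Tlevel s t S m).Nonempty ∧ X = ⋂₀ Tlevel s t S m}

/-- `T²_{i,j}`, the set of nested 2-tails with respect to `(i, j)`. -/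
def T2set {V E : Type} (s t : E → V) (v1 vi vj : V) : Set (Set V) :=
  Tset s t (S2set s t v1 vi vj)

/-- `S³_{i,j}`: the `T²_{i,j}`-free 3-tails containing `vi, vj`, omitting `v1`. -/
def S3set {V E : Type} (s t : E → V) (v1 vi vj : V) : Set (Set V) :=
  {Z | IsTail s t Z ∧ kcut s t Z = 3 ∧ vi ∈ Z ∧ vj ∈ Z ∧ v1 ∉ Z ∧
        ∀ W ∈ T2set s t v1 vi vj, FreePair s t Z W}

/-- `T³_{i,j}`, the set of nested 3-tails with respect to `(i, j)`. -/
def T3set {V E : Type} (s t : E → V) (v1 vi vj : V) : Set (Set V) :=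
  Tset s t (S3set s t v1 vi vj)

/-- `Z` is `T²_{i,j}`-normalized: every `Z`-terminal member of `T²_{i,j}`
forms a perfect pair with `Z`. -/
def T2Normalized {V E : Type} (s t : E → V) (v1 vi vj : V) (Z : Set V) : Prop :=
  ∀ W ∈ T2set s t v1 vi vj,
    TermPts s t W ∩ TermPts s t Z ≠ ∅ → PerfectPair Z W

/-! Uncrossing. Counting edge by edge, `k(A) + k(B) = k(A ∩ B) + k(A ∪ B) + 2 #E(A \ B, B \ A)`;
if the tails `A` and `B` cross, both `k(A ∩ B)` and `k(A ∪ B)` are at least 2, and a piece cut off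
inside a connected set by at most one edge stays connected. This makes `S²_{i,j}` and `S³_{i,j}`
closed under intersection, so `T² ⊆ S²` and `T³ ⊆ S³`, and Corollary 4.2 holds because the
intersections of the successive levels grow strictly while a given member of `S²` survives.

For disjoint `Z`, `W` sharing two of their three terminal points the identity gives
`k(Z ∪ W) = 2`, and `Z ∪ W` is a tail: a shared edge joins `Z` to `W`, and the single remaining edge
of `Z` attaches it to the complement of `Z ∪ W` inside the connected `Wᶜ`. The member `W' ∈ T²`
given by Corollary 4.2 is `Z`-terminal because `W` is `T²`-free, and normalization leaves
`Z ⊆ W'` as the only possible configuration. -/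

open Relation

section Connectivity

variable {V E : Type} {s t : E → V}

def AdjIn (s t : E → V) (Z : Set V) (a b : V) : Prop :=
  a ∈ Z ∧ b ∈ Z ∧ ∃ e, (s e = a ∧ t e = b) ∨ (s e = b ∧ t e = a)

instance (Z : Set V) : Std.Symm (AdjIn s t Z) where
  symm _ _ := fun ⟨ha, hb, e, he⟩ => ⟨hb, ha, e, he.symm⟩

def edgesBetween (s t : E → V) (X Y : Set V) : Set E :=
  {e | (s e ∈ X ∧ t e ∈ Y) ∨ (s e ∈ Y ∧ t e ∈ X)}

lemma reflTransGen_adjIn_mono {Z Z' : Set V} (h : Z ⊆ Z') {x y : V}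
    (hxy : ReflTransGen (AdjIn s t Z) x y) : ReflTransGen (AdjIn s t Z') x y :=
  ReflTransGen.mono (fun _ _ ⟨ha, hb, he⟩ => ⟨h ha, h hb, he⟩) _ _ hxy

lemma connOn_of_forall_reflTransGen {Z : Set V} {c : V}
    (h : ∀ x ∈ Z, ReflTransGen (AdjIn s t Z) x c) : ConnOn s t Z :=
  fun x hx y hy => (h x hx).trans (symm (h y hy))

lemma ConnOn.union {A B : Set V} (hA : ConnOn s t A) (hB : ConnOn s t B)
    (hAB : (A ∩ B).Nonempty) : ConnOn s t (A ∪ B) := by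
  obtain ⟨c, hcA, hcB⟩ := hAB
  refine connOn_of_forall_reflTransGen (c := c) ?_
  rintro x (hx | hx)
  · exact reflTransGen_adjIn_mono subset_union_left (hA x hx c hcA)
  · exact reflTransGen_adjIn_mono subset_union_right (hB x hx c hcB)

lemma ConnOn.union_of_edgesBetween_nonempty {A B : Set V} (hA : ConnOn s t A)
    (hB : ConnOn s t B) (hAB : (edgesBetween s t A B).Nonempty) : ConnOn s t (A ∪ B) := by
  obtain ⟨e, he⟩ := hAB
  obtain ⟨a, b, ha, hb, hab⟩ : ∃ a b, a ∈ A ∧ b ∈ B ∧ AdjIn s t (A ∪ B) a b := by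
    rcases he with ⟨hs, ht⟩ | ⟨hs, ht⟩
    · exact ⟨s e, t e, hs, ht, Or.inl hs, Or.inr ht, e, Or.inl ⟨rfl, rfl⟩⟩
    · exact ⟨t e, s e, ht, hs, Or.inl ht, Or.inr hs, e, Or.inr ⟨rfl, rfl⟩⟩
  refine connOn_of_forall_reflTransGen (c := b) ?_
  rintro x (hx | hx)
  · exact (reflTransGen_adjIn_mono subset_union_left (hA x hx a ha)).tail hab
  · exact reflTransGen_adjIn_mono subset_union_right (hB x hx b hb)

lemma ConnOn.edgesBetween_nonempty {Y P : Set V} (hY : ConnOn s t Y) {x y : V}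
    (hx : x ∈ Y ∩ P) (hy : y ∈ Y \ P) : (edgesBetween s t (Y ∩ P) (Y \ P)).Nonempty := by
  have key : ∀ z, ReflTransGen (AdjIn s t Y) x z → z ∉ P →
      (edgesBetween s t (Y ∩ P) (Y \ P)).Nonempty := by
    intro z hz
    induction hz with
    | refl => exact fun h => absurd hx.2 h
    | @tail b c _ hbc ih =>
      intro hc
      by_cases hb : b ∈ P
      · obtain ⟨hbY, hcY, e, he⟩ := hbc
        refine ⟨e, ?_⟩
        rcases he with ⟨rfl, rfl⟩ | ⟨rfl, rfl⟩
        · exact Or.inl ⟨⟨hbY, hb⟩, hcY, hc⟩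
        · exact Or.inr ⟨⟨hcY, hc⟩, hbY, hb⟩
      · exact ih hb
  exact key y (hY x hx.1 y hy.1) hy.2

lemma ConnOn.of_forall_edgesBetween {X Y : Set V} {v : V} (hY : ConnOn s t Y) (hXY : X ⊆ Y)
    (hv : v ∈ X) (h : ∀ e ∈ edgesBetween s t X (Y \ X), s e = v ∨ t e = v) :
    ConnOn s t X := by
  -- a walk in `Y` can only leave and re-enter `X` through `v`
  have key : ∀ y, ReflTransGen (AdjIn s t Y) v y → y ∈ X → ReflTransGen (AdjIn s t X) v y := by
    intro y hy
    induction hy with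
    | refl => exact fun _ => .refl
    | @tail b c _ hbc ih =>
      intro hc
      obtain ⟨hbY, -, e, he⟩ := hbc
      by_cases hb : b ∈ X
      · exact (ih hb).tail ⟨hb, hc, e, he⟩
      · have hcv : c = v := by
          rcases he with ⟨hs, ht⟩ | ⟨hs, ht⟩
          · rcases h e (Or.inr ⟨hs ▸ ⟨hbY, hb⟩, ht ▸ hc⟩) with hv' | hv'
            · exact absurd (hs ▸ hv' ▸ hv) hb
            · exact ht.symm.trans hv'
          · rcases h e (Or.inl ⟨hs ▸ hc, ht ▸ ⟨hbY, hb⟩⟩) with hv' | hv'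
            · exact hs.symm.trans hv'
            · exact absurd (ht ▸ hv' ▸ hv) hb
        exact hcv ▸ .refl
  exact connOn_of_forall_reflTransGen fun x hx => symm (key x (hY v (hXY hv) x (hXY hx)) hx)

lemma ConnOn.of_edgesBetween_subsingleton {X Y : Set V} (hY : ConnOn s t Y) (hXY : X ⊆ Y)
    (h : (edgesBetween s t X (Y \ X)).Subsingleton) : ConnOn s t X := by
  rcases (edgesBetween s t X (Y \ X)).eq_empty_or_nonempty with h0 | ⟨e₀, he₀⟩
  · rcases X.eq_empty_or_nonempty with rfl | ⟨v, hv⟩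
    · exact fun x hx => hx.elim
    · exact hY.of_forall_edgesBetween hXY hv fun e he => by rw [h0] at he; exact he.elim
  · obtain hs | ht : s e₀ ∈ X ∨ t e₀ ∈ X := he₀.imp And.left And.right
    · exact hY.of_forall_edgesBetween hXY hs fun e he => Or.inl (congrArg s (h he he₀))
    · exact hY.of_forall_edgesBetween hXY ht fun e he => Or.inr (congrArg t (h he he₀))

end Connectivity

section Cuts

variable {V E : Type} {s t : E → V}

lemma termPts_compl (Z : Set V) : TermPts s t Zᶜ = TermPts s t Z := by
  ext e; simp only [TermPts, mem_ofPred_eq, mem_compl_iff, not_not]; tauto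

lemma kcut_compl (Z : Set V) : kcut s t Zᶜ = kcut s t Z := by
  rw [kcut, kcut, termPts_compl]

lemma termPts_inter_subset (A B : Set V) :
    TermPts s t (A ∩ B) ⊆ TermPts s t A ∪ TermPts s t B := by
  intro e; simp only [TermPts, mem_ofPred_eq, mem_inter_iff, mem_union]; tauto

lemma termPts_union_subset (A B : Set V) :
    TermPts s t (A ∪ B) ⊆ TermPts s t A ∪ TermPts s t B := by
  rw [← termPts_compl, compl_union, ← termPts_compl A, ← termPts_compl B]
  exact termPts_inter_subset _ _

lemma termPts_inter_termPts_of_disjoint {A B : Set V} (h : Disjoint A B) :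
    TermPts s t A ∩ TermPts s t B = edgesBetween s t A B := by
  ext e
  have hs : s e ∈ A → s e ∉ B := fun h' => disjoint_left.mp h h'
  have ht : t e ∈ A → t e ∉ B := fun h' => disjoint_left.mp h h'
  simp only [TermPts, edgesBetween, mem_inter_iff, mem_ofPred_eq]
  tauto

lemma termPts_inter_subset_of_subset {X W Z : Set V} (hXW : X ⊆ W) (hWZ : Disjoint W Z) :
    TermPts s t X ∩ TermPts s t Z ⊆ TermPts s t W := by
  intro e
  have hs : s e ∈ W → s e ∉ Z := fun h => disjoint_left.mp hWZ h
  have ht : t e ∈ W → t e ∉ Z := fun h => disjoint_left.mp hWZ h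
  have hXs := @hXW (s e)
  have hXt := @hXW (t e)
  simp only [TermPts, mem_inter_iff, mem_ofPred_eq]
  tauto

lemma FreePair.symm {A B : Set V} (h : FreePair s t A B) : FreePair s t B A := by
  rwa [FreePair, inter_comm]

lemma not_freePair_self {A : Set V} (h : (TermPts s t A).Nonempty) : ¬FreePair s t A A := by
  rw [FreePair, inter_self]; exact h.ne_empty

lemma freePair_of_termPts_subset_union {A B X Y : Set V}
    (hY : TermPts s t Y ⊆ TermPts s t A ∪ TermPts s t B) (hA : FreePair s t A X)
    (hB : FreePair s t B X) : FreePair s t Y X := by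
  refine subset_empty_iff.mp ?_
  calc TermPts s t Y ∩ TermPts s t X
      ⊆ (TermPts s t A ∪ TermPts s t B) ∩ TermPts s t X := inter_subset_inter_left _ hY
    _ = ∅ := by rw [union_inter_distrib_right, hA, hB, union_empty]

lemma ncard_eq_sum_indicator [Fintype E] (X : Set E) : X.ncard = ∑ e, X.indicator 1 e := by
  classical
  simp [indicator_apply, Finset.sum_boole, ncard_eq_toFinset_card']

lemma kcut_add_kcut [Finite E] (A B : Set V) :
    kcut s t A + kcut s t B =
      kcut s t (A ∩ B) + kcut s t (A ∪ B) + 2 * (edgesBetween s t (A \ B) (B \ A)).ncard := by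
  cases nonempty_fintype E
  simp only [kcut, ncard_eq_sum_indicator, Finset.mul_sum, ← Finset.sum_add_distrib]
  refine Finset.sum_congr rfl fun e _ => ?_
  by_cases h1 : s e ∈ A <;> by_cases h2 : s e ∈ B <;> by_cases h3 : t e ∈ A <;>
    by_cases h4 : t e ∈ B <;> simp [TermPts, edgesBetween, h1, h2, h3, h4]

lemma kcut_union_of_disjoint [Finite E] {A B : Set V} (h : Disjoint A B) :
    kcut s t (A ∪ B) + 2 * (TermPts s t A ∩ TermPts s t B).ncard = kcut s t A + kcut s t B := by
  rw [kcut_add_kcut, h.inter_eq, h.sdiff_eq_left, h.sdiff_eq_right,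
    termPts_inter_termPts_of_disjoint h]
  simp [kcut, TermPts]

lemma ncard_edgesBetween_add_le_kcut_inter [Finite E] (A B : Set V) :
    (edgesBetween s t (A ∩ B) (A \ B)).ncard + (edgesBetween s t (A ∩ B) (B \ A)).ncard ≤
      kcut s t (A ∩ B) := by
  rw [← ncard_union_eq]
  · refine ncard_le_ncard ?_
    rintro e (h | h) <;> simp only [edgesBetween, TermPts, mem_ofPred_eq, mem_inter_iff,
      mem_sdiff] at h ⊢ <;> tauto
  · refine disjoint_left.mpr fun e h h' => ?_
    simp only [edgesBetween, mem_ofPred_eq, mem_inter_iff, mem_sdiff] at h h'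
    tauto

lemma two_le_kcut_inter [Finite E] {A B : Set V} (hA : ConnOn s t A) (hB : ConnOn s t B)
    (hI : (A ∩ B).Nonempty) (hAB : ¬A ⊆ B) (hBA : ¬B ⊆ A) : 2 ≤ kcut s t (A ∩ B) := by
  obtain ⟨x, hxA, hxB⟩ := hI
  obtain ⟨a, haA, haB⟩ := not_subset.mp hAB
  obtain ⟨b, hbB, hbA⟩ := not_subset.mp hBA
  have h₁ := (ncard_pos (toFinite _)).mpr
    (hA.edgesBetween_nonempty (P := B) ⟨hxA, hxB⟩ ⟨haA, haB⟩)
  have h₂ := (ncard_pos (toFinite _)).mpr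
    (hB.edgesBetween_nonempty (P := A) ⟨hxB, hxA⟩ ⟨hbB, hbA⟩)
  rw [inter_comm B A] at h₂
  have := ncard_edgesBetween_add_le_kcut_inter (s := s) (t := t) A B
  omega

lemma two_le_kcut_union [Finite E] {A B : Set V} (hA : ConnOn s t Aᶜ) (hB : ConnOn s t Bᶜ)
    (hO : (A ∪ B)ᶜ.Nonempty) (hAB : ¬A ⊆ B) (hBA : ¬B ⊆ A) : 2 ≤ kcut s t (A ∪ B) := by
  rw [← kcut_compl, compl_union]
  exact two_le_kcut_inter hA hB (by rwa [← compl_union]) (by rwa [compl_subset_compl])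
    (by rwa [compl_subset_compl])

end Cuts

section Tails

variable {V E : Type} {s t : E → V}

lemma IsTail.compl {Z : Set V} (h : IsTail s t Z) : IsTail s t Zᶜ :=
  ⟨⟨nonempty_compl.mpr h.1.2, compl_ne_univ.mpr h.1.1⟩, h.2.2, by rw [compl_compl]; exact h.2.1⟩

lemma IsTail.inter [Finite E] {A B : Set V} (hA : IsTail s t A) (hB : IsTail s t B)
    (hI : (A ∩ B).Nonempty) (hO : (A ∪ B)ᶜ.Nonempty) (hk : kcut s t (A ∩ B) ≤ 3) :
    IsTail s t (A ∩ B) := by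
  refine ⟨⟨hI, fun h => hA.1.2 (univ_subset_iff.mp (h ▸ inter_subset_left))⟩, ?_, ?_⟩
  · have := ncard_edgesBetween_add_le_kcut_inter (s := s) (t := t) A B
    rcases (by omega : (edgesBetween s t (A ∩ B) (A \ B)).ncard ≤ 1 ∨
        (edgesBetween s t (A ∩ B) (B \ A)).ncard ≤ 1) with h | h
    · refine hA.2.1.of_edgesBetween_subsingleton inter_subset_left ?_
      rw [sdiff_self_inter]
      exact ncard_le_one_iff_subsingleton.mp h
    · refine hB.2.1.of_edgesBetween_subsingleton inter_subset_right ?_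
      rw [sdiff_inter_self_eq_sdiff]
      exact ncard_le_one_iff_subsingleton.mp h
  · rw [compl_inter]
    exact hA.2.2.union hB.2.2 (by rwa [← compl_union])

lemma IsTail.union [Finite E] {A B : Set V} (hA : IsTail s t A) (hB : IsTail s t B)
    (hI : (A ∩ B).Nonempty) (hO : (A ∪ B)ᶜ.Nonempty) (hk : kcut s t (A ∪ B) ≤ 3) :
    IsTail s t (A ∪ B) := by
  have h := hA.compl.inter hB.compl (by rwa [← compl_union])
    (by rwa [compl_union, compl_compl, compl_compl]) (by rwa [← compl_union, kcut_compl])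
  rw [← compl_union] at h
  simpa only [compl_compl] using h.compl

lemma ConnOn.isTail_union_of_disjoint [Finite E] {Z W : Set V} (hZ : ConnOn s t Z)
    (hW : IsTail s t W) (hZW : Disjoint Z W) (hO : (Z ∪ W)ᶜ.Nonempty)
    (hE : (TermPts s t Z ∩ TermPts s t W).Nonempty)
    (h : (TermPts s t Z \ TermPts s t W).Subsingleton) : IsTail s t (Z ∪ W) := by
  refine ⟨⟨hW.1.1.mono subset_union_right, nonempty_compl.mp hO⟩,
    hZ.union_of_edgesBetween_nonempty hW.2.1 (termPts_inter_termPts_of_disjoint hZW ▸ hE), ?_⟩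
  refine hW.2.2.of_edgesBetween_subsingleton (compl_subset_compl.mpr subset_union_right)
    (h.anti ?_)
  have hdiff : Wᶜ \ (Z ∪ W)ᶜ = Z := by
    ext x
    have : x ∈ Z → x ∉ W := fun h => disjoint_left.mp hZW h
    simp only [mem_sdiff, mem_compl_iff, mem_union]
    tauto
  rw [hdiff]
  intro e he
  have hs : s e ∈ Z → s e ∉ W := fun h => disjoint_left.mp hZW h
  have ht : t e ∈ Z → t e ∉ W := fun h => disjoint_left.mp hZW h
  simp only [edgesBetween, TermPts, mem_sdiff, mem_compl_iff, mem_union, mem_ofPred_eq] at he ⊢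
  tauto

lemma ConnOn.isTail_union_and_kcut_eq_two [Finite E] {Z W : Set V} (hZ : ConnOn s t Z)
    (hW : IsTail s t W) (hZW : Disjoint Z W) (hO : (Z ∪ W)ᶜ.Nonempty) (hkZ : kcut s t Z = 3)
    (hkW : kcut s t W = 3) (hcard : (TermPts s t Z ∩ TermPts s t W).ncard = 2) :
    IsTail s t (Z ∪ W) ∧ kcut s t (Z ∪ W) = 2 := by
  have hdiff : (TermPts s t Z \ TermPts s t W).ncard ≤ 1 := by
    have := ncard_inter_add_ncard_sdiff_eq_ncard (TermPts s t Z) (TermPts s t W)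
    rw [kcut] at hkZ
    omega
  refine ⟨hZ.isTail_union_of_disjoint hW hZW hO (nonempty_of_ncard_ne_zero (by omega))
    (ncard_le_one_iff_subsingleton.mp hdiff), ?_⟩
  have := kcut_union_of_disjoint (s := s) (t := t) hZW
  omega

end Tails

lemma Set.Finite.sInter_mem_of_forall_inter_mem {α : Type*} {F : Set (Set α)} (hF : F.Finite)
    (hne : F.Nonempty) (h : ∀ A ∈ F, ∀ B ∈ F, A ∩ B ∈ F) : ⋂₀ F ∈ F := by
  have := Finset.inf'_mem F h hF.toFinset (by simpa using hne) id (by simp)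
  rwa [Finset.inf'_eq_inf, Finset.inf_id_eq_sInf, hF.coe_toFinset] at this

section NestedTails

variable {V E : Type} {s t : E → V} {S : Set (Set V)}

lemma Tlevel_subset (m : ℕ) : Tlevel s t S m ⊆ S := by
  cases m with
  | zero => exact subset_rfl
  | succ m => exact fun _ h => h.1

lemma Tlevel_inter_mem (hS : ∀ A ∈ S, ∀ B ∈ S, A ∩ B ∈ S)
    (hcut : ∀ A ∈ S, (TermPts s t A).Nonempty) :
    ∀ m, ∀ A ∈ Tlevel s t S m, ∀ B ∈ Tlevel s t S m, A ∩ B ∈ Tlevel s t S m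
  | 0 => hS
  | m + 1 => by
    rintro A ⟨hA, hWA, hfA⟩ B ⟨hB, hWB, hfB⟩
    have hAB := hS A hA B hB
    have hfree : FreePair s t (⋂₀ Tlevel s t S m) (A ∩ B) :=
      (freePair_of_termPts_subset_union (termPts_inter_subset A B) hfA.symm hfB.symm).symm
    refine ⟨hAB, ssubset_of_subset_of_ne (subset_inter hWA.subset hWB.subset) ?_, hfree⟩
    rintro heq
    rw [heq] at hfree
    exact not_freePair_self (hcut _ hAB) hfree

lemma sInter_Tlevel_mem [Finite V] (hS : ∀ A ∈ S, ∀ B ∈ S, A ∩ B ∈ S)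
    (hcut : ∀ A ∈ S, (TermPts s t A).Nonempty) {m : ℕ} (hne : (Tlevel s t S m).Nonempty) :
    ⋂₀ Tlevel s t S m ∈ Tlevel s t S m :=
  (toFinite _).sInter_mem_of_forall_inter_mem hne (Tlevel_inter_mem hS hcut m)

lemma Tset_subset [Finite V] (hS : ∀ A ∈ S, ∀ B ∈ S, A ∩ B ∈ S)
    (hcut : ∀ A ∈ S, (TermPts s t A).Nonempty) : Tset s t S ⊆ S := by
  rintro _ ⟨m, hne, rfl⟩
  exact Tlevel_subset m (sInter_Tlevel_mem hS hcut hne)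

lemma exists_mem_Tset_subset_not_freePair [Finite V] (hS : ∀ A ∈ S, ∀ B ∈ S, A ∩ B ∈ S)
    (hcut : ∀ A ∈ S, (TermPts s t A).Nonempty) {U : Set V} (hU : U ∈ S) :
    ∃ X ∈ Tset s t S, X ⊆ U ∧ ¬FreePair s t X U := by
  by_contra! hfree
  -- otherwise `U` lies in every level, and the strictly increasing `⋂₀ Tlevel m` outgrow `V`
  have key : ∀ m, U ∈ Tlevel s t S m ∧ m ≤ (⋂₀ Tlevel s t S m).ncard := by
    intro m
    induction m with
    | zero => exact ⟨hU, Nat.zero_le _⟩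
    | succ m ih =>
      have hWU : ⋂₀ Tlevel s t S m ⊆ U := sInter_subset_of_mem ih.1
      have hf := hfree _ ⟨m, ⟨U, ih.1⟩, rfl⟩ hWU
      have hU' : U ∈ Tlevel s t S (m + 1) :=
        ⟨hU, ssubset_of_subset_of_ne hWU fun h => not_freePair_self (hcut U hU) (h ▸ hf), hf⟩
      have hlt := (sInter_Tlevel_mem hS hcut ⟨U, hU'⟩).2.1
      exact ⟨hU', ih.2.trans_lt (ncard_lt_ncard hlt)⟩
  exact (key (Nat.card V + 1)).2.not_gt (Nat.lt_succ_of_le (ncard_le_card _))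

end NestedTails

section TwoAndThreeTails

variable {V E : Type} {s t : E → V} {v1 vi vj : V}

lemma S2set_termPts_nonempty {A : Set V} (hA : A ∈ S2set s t v1 vi vj) :
    (TermPts s t A).Nonempty :=
  nonempty_of_ncard_ne_zero (show kcut s t A ≠ 0 by rw [hA.2.1]; norm_num)

lemma S3set_termPts_nonempty {A : Set V} (hA : A ∈ S3set s t v1 vi vj) :
    (TermPts s t A).Nonempty :=
  nonempty_of_ncard_ne_zero (show kcut s t A ≠ 0 by rw [hA.2.1]; norm_num)

variable [Finite E]

lemma S2set_inter_mem {A B : Set V} (hA : A ∈ S2set s t v1 vi vj)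
    (hB : B ∈ S2set s t v1 vi vj) : A ∩ B ∈ S2set s t v1 vi vj := by
  by_cases hAB : A ⊆ B
  · rwa [inter_eq_left.mpr hAB]
  by_cases hBA : B ⊆ A
  · rwa [inter_eq_right.mpr hBA]
  obtain ⟨hAt, hkA, hiA, hjA, h1A⟩ := hA
  obtain ⟨hBt, hkB, hiB, hjB, h1B⟩ := hB
  have hI : (A ∩ B).Nonempty := ⟨vi, hiA, hiB⟩
  have hO : (A ∪ B)ᶜ.Nonempty := ⟨v1, by simp [h1A, h1B]⟩
  have := kcut_add_kcut (s := s) (t := t) A B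
  have := two_le_kcut_inter hAt.2.1 hBt.2.1 hI hAB hBA
  have := two_le_kcut_union hAt.2.2 hBt.2.2 hO hAB hBA
  have hk : kcut s t (A ∩ B) = 2 := by omega
  exact ⟨hAt.inter hBt hI hO (by omega), hk, ⟨hiA, hiB⟩, ⟨hjA, hjB⟩, fun h => h1A h.1⟩

lemma T2set_subset_S2set [Finite V] : T2set s t v1 vi vj ⊆ S2set s t v1 vi vj :=
  Tset_subset (fun _ hA _ hB => S2set_inter_mem hA hB) fun _ hA => S2set_termPts_nonempty hA

lemma exists_T2set_subset_not_freePair [Finite V] {U : Set V} (hU : U ∈ S2set s t v1 vi vj) :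
    ∃ X ∈ T2set s t v1 vi vj, X ⊆ U ∧ ¬FreePair s t X U :=
  exists_mem_Tset_subset_not_freePair (fun _ hA _ hB => S2set_inter_mem hA hB)
    (fun _ hA => S2set_termPts_nonempty hA) hU

lemma notMem_S2set_of_forall_freePair [Finite V] {Y : Set V}
    (h : ∀ X ∈ T2set s t v1 vi vj, FreePair s t Y X) : Y ∉ S2set s t v1 vi vj := fun hY => by
  obtain ⟨X, hX, -, hXY⟩ := exists_T2set_subset_not_freePair hY
  exact hXY (h X hX).symm

lemma S3set_inter_mem [Finite V] {A B : Set V} (hA : A ∈ S3set s t v1 vi vj)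
    (hB : B ∈ S3set s t v1 vi vj) : A ∩ B ∈ S3set s t v1 vi vj := by
  by_cases hAB : A ⊆ B
  · rwa [inter_eq_left.mpr hAB]
  by_cases hBA : B ⊆ A
  · rwa [inter_eq_right.mpr hBA]
  obtain ⟨hAt, hkA, hiA, hjA, h1A, hfA⟩ := hA
  obtain ⟨hBt, hkB, hiB, hjB, h1B, hfB⟩ := hB
  have hI : (A ∩ B).Nonempty := ⟨vi, hiA, hiB⟩
  have hO : (A ∪ B)ᶜ.Nonempty := ⟨v1, by simp [h1A, h1B]⟩
  have hfI : ∀ X ∈ T2set s t v1 vi vj, FreePair s t (A ∩ B) X := fun X hX =>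
    freePair_of_termPts_subset_union (termPts_inter_subset A B) (hfA X hX) (hfB X hX)
  have hfU : ∀ X ∈ T2set s t v1 vi vj, FreePair s t (A ∪ B) X := fun X hX =>
    freePair_of_termPts_subset_union (termPts_union_subset A B) (hfA X hX) (hfB X hX)
  have := kcut_add_kcut (s := s) (t := t) A B
  have := two_le_kcut_inter hAt.2.1 hBt.2.1 hI hAB hBA
  have := two_le_kcut_union hAt.2.2 hBt.2.2 hO hAB hBA
  -- a cut of size 2 would make `A ∩ B` or `A ∪ B` a `T²`-free member of `S²`
  have hI2 : kcut s t (A ∩ B) ≠ 2 := fun hk => notMem_S2set_of_forall_freePair hfI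
    ⟨hAt.inter hBt hI hO (by omega), hk, ⟨hiA, hiB⟩, ⟨hjA, hjB⟩, fun h => h1A h.1⟩
  have hU2 : kcut s t (A ∪ B) ≠ 2 := fun hk => notMem_S2set_of_forall_freePair hfU
    ⟨hAt.union hBt hI hO (by omega), hk, Or.inl hiA, Or.inl hjA, by simp [h1A, h1B]⟩
  have hk : kcut s t (A ∩ B) = 3 := by omega
  exact ⟨hAt.inter hBt hI hO hk.le, hk, ⟨hiA, hiB⟩, ⟨hjA, hjB⟩, fun h => h1A h.1, hfI⟩

lemma T3set_subset_S3set [Finite V] : T3set s t v1 vi vj ⊆ S3set s t v1 vi vj :=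
  Tset_subset (fun _ hA _ hB => S3set_inter_mem hA hB) fun _ hA => S3set_termPts_nonempty hA

end TwoAndThreeTails

theorem stmt_19_general {V E : Type} [Fintype V] [Fintype E] (s t : E → V)
    (v1 vi vj : V) (Z W : Set V)
    (hZ : IsTail s t Z) (hkZ : kcut s t Z = 3)
    (hnorm : T2Normalized s t v1 vi vj Z)
    (hi : vi ∈ Zᶜ) (h1 : v1 ∈ Zᶜ)
    (hW : W ∈ T3set s t v1 vi vj)
    (hWc : W ⊆ Zᶜ)
    (hcard : (TermPts s t Z ∩ TermPts s t W).ncard = 2) :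
    (IsTail s t (Z ∪ W) ∧ kcut s t (Z ∪ W) = 2 ∧
      vi ∈ Z ∪ W ∧ vj ∈ Z ∪ W ∧ v1 ∉ Z ∪ W) ∧
    ∃ W' ∈ T2set s t v1 vi vj,
      TermPts s t W' ∩ TermPts s t Z ≠ ∅ ∧ Z ⊆ W' := by
  obtain ⟨hWt, hkW, hiW, hjW, h1W, hWfree⟩ := T3set_subset_S3set hW
  have hZW : Disjoint Z W := subset_compl_iff_disjoint_left.mp hWc
  have h1U : v1 ∉ Z ∪ W := fun h => h.elim h1 h1W
  obtain ⟨hUt, hkU⟩ := hZ.2.1.isTail_union_and_kcut_eq_two hWt hZW ⟨v1, h1U⟩ hkZ hkW hcard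
  have hU : Z ∪ W ∈ S2set s t v1 vi vj := ⟨hUt, hkU, Or.inr hiW, Or.inr hjW, h1U⟩
  refine ⟨hU, ?_⟩
  obtain ⟨W', hW'T, hW'U, hW'free⟩ := exists_T2set_subset_not_freePair hU
  have hWW' := eq_empty_iff_forall_notMem.mp (hWfree W' hW'T)
  -- `W` is free with respect to `W'`, so the cut edge shared by `W'` and `Z ∪ W` lies on `Z`
  obtain ⟨e, heW', heZ⟩ : (TermPts s t W' ∩ TermPts s t Z).Nonempty := by
    obtain ⟨e, heW', heU⟩ := nonempty_iff_ne_empty.mpr hW'free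
    exact ⟨e, heW', (termPts_union_subset Z W heU).resolve_right fun heW => hWW' e ⟨heW, heW'⟩⟩
  have hterm : TermPts s t W' ∩ TermPts s t Z ≠ ∅ := nonempty_iff_ne_empty.mp ⟨e, heW', heZ⟩
  refine ⟨W', hW'T, hterm, ?_⟩
  rcases hnorm W' hW'T hterm with h | h | h | h
  · exact h
  · exact absurd (h (T2set_subset_S2set hW'T).2.2.1) hi
  · have hWZ : W = Zᶜ := hWc.antisymm fun x hx => (hW'U (h hx)).resolve_left hx
    rw [hWZ, termPts_compl, inter_self] at hcard
    rw [kcut] at hkZ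
    omega
  · have hW'W : W' ⊆ W := fun x hx => (hW'U hx).resolve_left (h hx)
    exact (hWW' e ⟨termPts_inter_subset_of_subset hW'W hZW.symm ⟨heW', heZ⟩, heW'⟩).elim

/-- Lemma 5.6: let `Z` be a `T²_{i,j}`-normalized 3-tail with
`C_i ∪ C_j ∪ C_1 ⊆ Zᶜ`, and `W` a `Z`-terminal tail of `T³_{i,j}` contained
in `Zᶜ` with `#(Term_Z ∩ Term_W) = 2`. Then `Z ∪ W` is a 2-tail containing
`v_i, v_j` and omitting `v_1`, and there is a `Z`-terminal tail
`W' ∈ T²_{i,j}` with `Z ⊆ W'`. -/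
theorem stmt_19 {V E : Type} [Fintype V] [Fintype E] (s t : E → V)
    (hC : ConnOn s t Set.univ) (v1 vi vj : V) (Z W : Set V)
    (hZ : IsTail s t Z) (hkZ : kcut s t Z = 3)
    (hnorm : T2Normalized s t v1 vi vj Z)
    (hi : vi ∈ Zᶜ) (hj : vj ∈ Zᶜ) (h1 : v1 ∈ Zᶜ)
    (hW : W ∈ T3set s t v1 vi vj)
    (hWterm : TermPts s t W ∩ TermPts s t Z ≠ ∅)
    (hWc : W ⊆ Zᶜ)
    (hcard : (TermPts s t Z ∩ TermPts s t W).ncard = 2) :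
    (IsTail s t (Z ∪ W) ∧ kcut s t (Z ∪ W) = 2 ∧
      vi ∈ Z ∪ W ∧ vj ∈ Z ∪ W ∧ v1 ∉ Z ∪ W) ∧
    ∃ W' ∈ T2set s t v1 vi vj,
      TermPts s t W' ∩ TermPts s t Z ≠ ∅ ∧ Z ⊆ W' :=
  stmt_19_general s t v1 vi vj Z W hZ hkZ hnorm hi h1 hW hWc hcard
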